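/- In the natural deduction system N2Int the following four rules are derivable: (i) if Γ1;Δ1 ⊢+_{N2Int} φ∨ψ, Γ2∪{φ};Δ2 ⊢−_{N2Int} χ and Γ3∪{ψ};Δ3 ⊢−_{N2Int} χ, then Γ1∪Γ2∪Γ3;Δ1∪Δ2∪Δ3 ⊢−_{N2Int} χ; (ii) if Γ;Δ ⊢+_{N2Int} ⊥ then Γ;Δ ⊢−_{N2Int} φ for every formula φ; (iii) if Γ1;Δ1 ⊢−_{N2Int} φ∧ψ, Γ2;Δ2∪{φ} ⊢+_{N2Int} χ and Γ3;Δ3∪{ψ} ⊢+_{N2Int} χ, then Γ1∪Γ2∪Γ3;Δ1∪Δ2∪Δ3 ⊢+_{N2Int} χ; (iv) if Γ;Δ ⊢−_{N2Int} ⊤ then Γ;Δ ⊢+_{N2Int} φ for every formula φ. Consequently, the deducibility relations ⊢+ and ⊢− of N2Int and of N2Int* coincide. -/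

import Mathlib

/-- Signs: `pos` for proof/assertion, `neg` for refutation/rejection. -/
inductive Sign where
  | pos
  | neg
deriving DecidableEq

/-- The dual of a sign. -/
def Sign.dual : Sign → Sign
  | .pos => .neg
  | .neg => .pos

/-- Formulas of the bilateral logic 2Int. -/
inductive Form where
  | atom : ℕ → Form
  | bot : Form
  | top : Form
  | and : Form → Form → Form
  | or : Form → Form → Form
  | imp : Form → Form → Form
  | coimp : Form → Form → Form
deriving DecidableEq

/-- Natural deduction for 2Int: `ND true` is N2Int*, `ND false` is N2Int. -/
inductive ND (star : Bool) : Set Form → Set Form → Sign → Form → Prop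
  | hypPos {Γ Δ : Set Form} {φ : Form} : φ ∈ Γ → ND star Γ Δ .pos φ
  | hypNeg {Γ Δ : Set Form} {φ : Form} : φ ∈ Δ → ND star Γ Δ .neg φ
  | topI {Γ Δ : Set Form} : ND star Γ Δ .pos .top
  | botI {Γ Δ : Set Form} : ND star Γ Δ .neg .bot
  | andI {Γ Δ : Set Form} {φ ψ : Form} : ND star Γ Δ .pos φ → ND star Γ Δ .pos ψ →
      ND star Γ Δ .pos (φ.and ψ)
  | andE1 {Γ Δ : Set Form} {φ ψ : Form} : ND star Γ Δ .pos (φ.and ψ) → ND star Γ Δ .pos φ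
  | andE2 {Γ Δ : Set Form} {φ ψ : Form} : ND star Γ Δ .pos (φ.and ψ) → ND star Γ Δ .pos ψ
  | orI1 {Γ Δ : Set Form} {φ ψ : Form} : ND star Γ Δ .pos φ → ND star Γ Δ .pos (φ.or ψ)
  | orI2 {Γ Δ : Set Form} {φ ψ : Form} : ND star Γ Δ .pos ψ → ND star Γ Δ .pos (φ.or ψ)
  | impI {Γ Δ : Set Form} {φ ψ : Form} : ND star (insert φ Γ) Δ .pos ψ → ND star Γ Δ .pos (φ.imp ψ)
  | impE {Γ Δ : Set Form} {φ ψ : Form} : ND star Γ Δ .pos (φ.imp ψ) → ND star Γ Δ .pos φ →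
      ND star Γ Δ .pos ψ
  | coimpI {Γ Δ : Set Form} {φ ψ : Form} : ND star Γ Δ .pos φ → ND star Γ Δ .neg ψ →
      ND star Γ Δ .pos (φ.coimp ψ)
  | coimpE1 {Γ Δ : Set Form} {φ ψ : Form} : ND star Γ Δ .pos (φ.coimp ψ) → ND star Γ Δ .pos φ
  | coimpE2 {Γ Δ : Set Form} {φ ψ : Form} : ND star Γ Δ .pos (φ.coimp ψ) → ND star Γ Δ .neg ψ
  | orIneg {Γ Δ : Set Form} {φ ψ : Form} : ND star Γ Δ .neg φ → ND star Γ Δ .neg ψ →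
      ND star Γ Δ .neg (φ.or ψ)
  | orE1neg {Γ Δ : Set Form} {φ ψ : Form} : ND star Γ Δ .neg (φ.or ψ) → ND star Γ Δ .neg φ
  | orE2neg {Γ Δ : Set Form} {φ ψ : Form} : ND star Γ Δ .neg (φ.or ψ) → ND star Γ Δ .neg ψ
  | andI1neg {Γ Δ : Set Form} {φ ψ : Form} : ND star Γ Δ .neg φ → ND star Γ Δ .neg (φ.and ψ)
  | andI2neg {Γ Δ : Set Form} {φ ψ : Form} : ND star Γ Δ .neg ψ → ND star Γ Δ .neg (φ.and ψ)
  | coimpIneg {Γ Δ : Set Form} {φ ψ : Form} : ND star Γ (insert ψ Δ) .neg φ →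
      ND star Γ Δ .neg (φ.coimp ψ)
  | coimpEneg {Γ Δ : Set Form} {φ ψ : Form} : ND star Γ Δ .neg (φ.coimp ψ) → ND star Γ Δ .neg ψ →
      ND star Γ Δ .neg φ
  | impIneg {Γ Δ : Set Form} {φ ψ : Form} : ND star Γ Δ .pos φ → ND star Γ Δ .neg ψ →
      ND star Γ Δ .neg (φ.imp ψ)
  | impE1neg {Γ Δ : Set Form} {φ ψ : Form} : ND star Γ Δ .neg (φ.imp ψ) → ND star Γ Δ .pos φ
  | impE2neg {Γ Δ : Set Form} {φ ψ : Form} : ND star Γ Δ .neg (φ.imp ψ) → ND star Γ Δ .neg ψ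
  | orE {Γ Δ : Set Form} {φ ψ χ : Form} {s : Sign} (hs : star = true ∨ s = Sign.pos) :
      ND star Γ Δ .pos (φ.or ψ) → ND star (insert φ Γ) Δ s χ →
      ND star (insert ψ Γ) Δ s χ → ND star Γ Δ s χ
  | botE {Γ Δ : Set Form} {χ : Form} {s : Sign} (hs : star = true ∨ s = Sign.pos) :
      ND star Γ Δ .pos .bot → ND star Γ Δ s χ
  | andEneg {Γ Δ : Set Form} {φ ψ χ : Form} {s : Sign} (hs : star = true ∨ s = Sign.neg) :
      ND star Γ Δ .neg (φ.and ψ) → ND star Γ (insert φ Δ) s χ →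
      ND star Γ (insert ψ Δ) s χ → ND star Γ Δ s χ
  | topEneg {Γ Δ : Set Form} {χ : Form} {s : Sign} (hs : star = true ∨ s = Sign.neg) :
      ND star Γ Δ .neg .top → ND star Γ Δ s χ

/-!
The sign restrictions on E∨(+), ⊥(+), E∧(−) and ⊤(−) cost nothing, because each sign can be
coded by the other: a refutation of χ is equivalent to a proof of ⊤ ↤ χ (by I↤(+) and E↤₂(+)),
and a proof of χ to a refutation of χ → ⊥ (by I→(−) and E→₁(−)). Running a restricted
elimination on the coded conclusion and decoding yields the unrestricted one, and with these
derived rules an induction on deductions translates N2Int* into N2Int.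
-/

namespace ND

variable {star : Bool} {Γ Δ : Set Form} {s : Sign} {φ ψ χ : Form}

theorem weaken {Γ' Δ' : Set Form} (h : ND star Γ Δ s φ) (hΓ : Γ ⊆ Γ') (hΔ : Δ ⊆ Δ') :
    ND star Γ' Δ' s φ := by
  induction h generalizing Γ' Δ' with
  | hypPos h => exact .hypPos (hΓ h)
  | hypNeg h => exact .hypNeg (hΔ h)
  | impI _ ih => exact .impI (ih (Set.insert_subset_insert hΓ) hΔ)
  | coimpIneg _ ih => exact .coimpIneg (ih hΓ (Set.insert_subset_insert hΔ))
  | orE hs _ _ _ ih ih₁ ih₂ =>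
    exact .orE hs (ih hΓ hΔ) (ih₁ (Set.insert_subset_insert hΓ) hΔ)
      (ih₂ (Set.insert_subset_insert hΓ) hΔ)
  | andEneg hs _ _ _ ih ih₁ ih₂ =>
    exact .andEneg hs (ih hΓ hΔ) (ih₁ hΓ (Set.insert_subset_insert hΔ))
      (ih₂ hΓ (Set.insert_subset_insert hΔ))
  | _ => aesop (add 50% constructors ND)

theorem orElim (h : ND star Γ Δ .pos (φ.or ψ)) (h₁ : ND star (insert φ Γ) Δ s χ)
    (h₂ : ND star (insert ψ Γ) Δ s χ) : ND star Γ Δ s χ := by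
  cases s with
  | pos => exact .orE (.inr rfl) h h₁ h₂
  | neg =>
    exact .coimpE2 (.orE (χ := Form.top.coimp χ) (.inr rfl) h (.coimpI .topI h₁)
      (.coimpI .topI h₂))

theorem botElim (h : ND star Γ Δ .pos .bot) : ND star Γ Δ s χ := by
  cases s with
  | pos => exact .botE (.inr rfl) h
  | neg => exact .coimpE2 (.botE (χ := Form.top.coimp χ) (.inr rfl) h)

theorem andNegElim (h : ND star Γ Δ .neg (φ.and ψ)) (h₁ : ND star Γ (insert φ Δ) s χ)
    (h₂ : ND star Γ (insert ψ Δ) s χ) : ND star Γ Δ s χ := by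
  cases s with
  | neg => exact .andEneg (.inr rfl) h h₁ h₂
  | pos =>
    exact .impE1neg (.andEneg (χ := χ.imp .bot) (.inr rfl) h (.impIneg h₁ .botI)
      (.impIneg h₂ .botI))

theorem topNegElim (h : ND star Γ Δ .neg .top) : ND star Γ Δ s χ := by
  cases s with
  | neg => exact .topEneg (.inr rfl) h
  | pos => exact .impE1neg (.topEneg (χ := χ.imp .bot) (.inr rfl) h)

theorem toStar (star' : Bool) (h : ND star Γ Δ s φ) : ND star' Γ Δ s φ := by
  induction h with
  | orE _ _ _ _ ih ih₁ ih₂ => exact ih.orElim ih₁ ih₂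
  | botE _ _ ih => exact ih.botElim
  | andEneg _ _ _ _ ih ih₁ ih₂ => exact ih.andNegElim ih₁ ih₂
  | topEneg _ _ ih => exact ih.topNegElim
  | _ => aesop (add 50% constructors ND)

end ND

theorem n2int_derivable_rules_and_coincidence :
    (∀ (Γ₁ Γ₂ Γ₃ Δ₁ Δ₂ Δ₃ : Set Form) (φ ψ χ : Form),
        ND false Γ₁ Δ₁ .pos (φ.or ψ) → ND false (insert φ Γ₂) Δ₂ .neg χ →
        ND false (insert ψ Γ₃) Δ₃ .neg χ →
        ND false (Γ₁ ∪ Γ₂ ∪ Γ₃) (Δ₁ ∪ Δ₂ ∪ Δ₃) .neg χ) ∧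
    (∀ (Γ Δ : Set Form) (φ : Form),
        ND false Γ Δ .pos .bot → ND false Γ Δ .neg φ) ∧
    (∀ (Γ₁ Γ₂ Γ₃ Δ₁ Δ₂ Δ₃ : Set Form) (φ ψ χ : Form),
        ND false Γ₁ Δ₁ .neg (φ.and ψ) → ND false Γ₂ (insert φ Δ₂) .pos χ →
        ND false Γ₃ (insert ψ Δ₃) .pos χ →
        ND false (Γ₁ ∪ Γ₂ ∪ Γ₃) (Δ₁ ∪ Δ₂ ∪ Δ₃) .pos χ) ∧
    (∀ (Γ Δ : Set Form) (φ : Form),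
        ND false Γ Δ .neg .top → ND false Γ Δ .pos φ) ∧
    (∀ (Γ Δ : Set Form) (s : Sign) (φ : Form),
        ND false Γ Δ s φ ↔ ND true Γ Δ s φ) := by
  refine ⟨fun _ _ _ _ _ _ _ _ _ h h₁ h₂ =>
      ND.orElim (h.weaken ?_ ?_) (h₁.weaken ?_ ?_) (h₂.weaken ?_ ?_),
    fun _ _ _ h => h.botElim,
    fun _ _ _ _ _ _ _ _ _ h h₁ h₂ =>
      ND.andNegElim (h.weaken ?_ ?_) (h₁.weaken ?_ ?_) (h₂.weaken ?_ ?_),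
    fun _ _ _ h => h.topNegElim,
    fun _ _ _ _ => ⟨ND.toStar true, ND.toStar false⟩⟩
  all_goals
    intro x
    simp only [Set.mem_insert_iff, Set.mem_union]
    tauto
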